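/- For every integer r ≥ 3 and integers n₁ ≥ n₂ ≥ ⋯ ≥ n_r ≥ 1, every edge-coloring of the complete r-partite graph K_{n₁,n₂,…,n_r} using exactly n₁ + n₂ + ⋯ + n_r colors contains a rainbow 3-cycle or a rainbow 4-cycle. -/

import Mathlib

open Finset

/-- The complete `r`-partite graph with parts of sizes `n 0, n 1, …, n (r-1)`. -/
def Kpartite (r : ℕ) (n : ℕ → ℕ) : SimpleGraph ((i : Fin r) × Fin (n i)) :=
  SimpleGraph.completeMultipartiteGraph fun i : Fin r => Fin (n i)

/-- The edge-coloring `c` contains a rainbow 3-cycle in `G`. -/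
def RainbowC3 {V α : Type*} (G : SimpleGraph V) (c : Sym2 V → α) : Prop :=
  ∃ a b d : V, G.Adj a b ∧ G.Adj b d ∧ G.Adj d a ∧
    c s(a, b) ≠ c s(b, d) ∧ c s(b, d) ≠ c s(d, a) ∧ c s(a, b) ≠ c s(d, a)

/-- The edge-coloring `c` contains a rainbow 4-cycle in `G`. -/
def RainbowC4 {V α : Type*} (G : SimpleGraph V) (c : Sym2 V → α) : Prop :=
  ∃ a b d e : V, G.Adj a b ∧ G.Adj b d ∧ G.Adj d e ∧ G.Adj e a ∧
    a ≠ d ∧ b ≠ e ∧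
    c s(a, b) ≠ c s(b, d) ∧ c s(a, b) ≠ c s(d, e) ∧ c s(a, b) ≠ c s(e, a) ∧
    c s(b, d) ≠ c s(d, e) ∧ c s(b, d) ≠ c s(e, a) ∧ c s(d, e) ≠ c s(e, a)

/-- The coloring `c` uses every one of the `k` colors on at least one edge of `G`
(i.e. it uses exactly `k` colors). -/
def SurjOnEdges {V : Type*} {k : ℕ} (G : SimpleGraph V) (c : Sym2 V → Fin k) : Prop :=
  ∀ i : Fin k, ∃ e ∈ G.edgeSet, c e = i

/-! A choice of one edge of each color gives as many edges as vertices, hence a cycle, and that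
cycle is rainbow. A shortest rainbow cycle has no chord: a chord splits it into two shorter
cycles, and as the color of the chord occurs on at most one of the two arcs, the other arc closed
up by the chord is rainbow. In a complete multipartite graph a cycle `v₀ v₁ ⋯` of length at least
five always has the chord `v₀v₂` or `v₀v₃`, because `v₂` and `v₃` are adjacent and so cannot
both lie in the part of `v₀`. -/

namespace SimpleGraph

variable {V α : Type*} {G : SimpleGraph V}

lemma IsAcyclic.card_edgeFinset_lt [Fintype V] [Nonempty V] [Fintype G.edgeSet]
    (hG : G.IsAcyclic) : #G.edgeFinset < Fintype.card V := by
  classical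
  obtain ⟨T, hGT, -, hT⟩ := connected_top.exists_isTree_le_of_le_of_isAcyclic le_top hG
  calc #G.edgeFinset ≤ #T.edgeFinset := card_le_card (edgeFinset_mono hGT)
    _ < Fintype.card V := by rw [← hT.card_edgeFinset]; omega

lemma IsCompleteMultipartite.adj_or_adj (hG : G.IsCompleteMultipartite) {a b : V}
    (hab : G.Adj a b) (x : V) : G.Adj x a ∨ G.Adj x b := by
  by_contra! h
  exact hG.trans a x b (fun hax => h.1 hax.symm) h.2 hab

namespace Walk

def IsRainbow {u v : V} (p : G.Walk u v) (c : Sym2 V → α) : Prop :=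
  (p.edges.map c).Nodup

variable {c : Sym2 V → α} {u : V}

lemma IsCycle.exists_shorter_isRainbow_of_adj_getVert {p : G.Walk u u} (hp : p.IsCycle)
    (hc : p.IsRainbow c) {j : ℕ} (hj : 2 ≤ j) (hjp : j + 2 ≤ p.length)
    (hchord : G.Adj u (p.getVert j)) :
    ∃ (w : V) (q : G.Walk w w), q.IsCycle ∧ q.IsRainbow c ∧ q.length < p.length := by
  have hsplit : p.edges.map c = (p.take j).edges.map c ++ (p.drop j).edges.map c := by
    rw [← List.map_append, ← edges_append, append_take_drop_eq]
  rw [IsRainbow, hsplit, List.nodup_append] at hc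
  obtain ⟨htake, hdrop, hdisj⟩ := hc
  by_cases hmem : c s(u, p.getVert j) ∈ (p.take j).edges.map c
  · have hnot : c s(u, p.getVert j) ∉ (p.drop j).edges.map c := fun h => hdisj _ hmem _ h rfl
    refine ⟨u, cons hchord (p.drop j), ?_, ?_, ?_⟩
    · exact (cons_isCycle_iff _ _).2
        ⟨hp.isPath_drop (by omega), fun h => hnot (List.mem_map_of_mem h)⟩
    · simp only [IsRainbow, edges_cons, List.map_cons, List.nodup_cons]
      exact ⟨hnot, hdrop⟩
    · rw [length_cons, drop_length]; omega
  · rw [Sym2.eq_swap] at hmem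
    refine ⟨p.getVert j, cons hchord.symm (p.take j), ?_, ?_, ?_⟩
    · exact (cons_isCycle_iff _ _).2
        ⟨hp.isPath_take (by omega), fun h => hmem (List.mem_map_of_mem h)⟩
    · simp only [IsRainbow, edges_cons, List.map_cons, List.nodup_cons]
      exact ⟨hmem, htake⟩
    · rw [length_cons, take_length]; omega

lemma IsRainbow.rainbowC3 {p : G.Walk u u} (hc : p.IsRainbow c) (h3 : p.length = 3) :
    RainbowC3 G c := by
  rcases p with _ | ⟨h₁, _ | ⟨h₂, _ | ⟨h₃, _ | ⟨_, _⟩⟩⟩⟩ <;> simp at h3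
  simp only [IsRainbow, edges_cons, edges_nil, List.map_cons, List.map_nil, List.nodup_cons,
    List.mem_cons, List.not_mem_nil] at hc
  exact ⟨_, _, _, h₁, h₂, h₃, by tauto, by tauto, by tauto⟩

lemma IsCycle.rainbowC4 {p : G.Walk u u} (hp : p.IsCycle) (hc : p.IsRainbow c)
    (h4 : p.length = 4) : RainbowC4 G c := by
  rcases p with _ | ⟨h₁, _ | ⟨h₂, _ | ⟨h₃, _ | ⟨h₄, _ | ⟨_, _⟩⟩⟩⟩⟩ <;> simp at h4
  have hsupp := hp.support_nodup
  simp only [IsRainbow, edges_cons, edges_nil, List.map_cons, List.map_nil, List.nodup_cons,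
    List.mem_cons, List.not_mem_nil] at hc
  simp only [support_cons, support_nil, List.tail_cons, List.nodup_cons, List.mem_cons,
    List.not_mem_nil] at hsupp
  exact ⟨_, _, _, _, h₁, h₂, h₃, h₄, by tauto, by tauto, by tauto, by tauto, by tauto, by tauto,
    by tauto, by tauto⟩

end Walk

open Walk

variable {c : Sym2 V → α}

lemma IsCompleteMultipartite.exists_shorter_isRainbow (hG : G.IsCompleteMultipartite)
    {u : V} {p : G.Walk u u} (hp : p.IsCycle) (hc : p.IsRainbow c) (h5 : 5 ≤ p.length) :
    ∃ (w : V) (q : G.Walk w w), q.IsCycle ∧ q.IsRainbow c ∧ q.length < p.length := by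
  rcases hG.adj_or_adj (p.adj_getVert_succ (i := 2) (by omega)) u with h | h
  · exact hp.exists_shorter_isRainbow_of_adj_getVert hc le_rfl (by omega) h
  · exact hp.exists_shorter_isRainbow_of_adj_getVert hc (by omega) (by omega) h

theorem IsCompleteMultipartite.rainbowC3_or_rainbowC4 (hG : G.IsCompleteMultipartite)
    {u : V} {p : G.Walk u u} (hp : p.IsCycle) (hc : p.IsRainbow c) :
    RainbowC3 G c ∨ RainbowC4 G c := by
  induction hlen : p.length using Nat.strong_induction_on generalizing u p with
  | _ m ih =>
    have := hp.three_le_length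
    rcases (by omega : m = 3 ∨ m = 4 ∨ 5 ≤ m) with h | h | h
    · exact .inl (hc.rainbowC3 (hlen.trans h))
    · exact .inr (hp.rainbowC4 hc (hlen.trans h))
    · obtain ⟨w, q, hq, hqc, hlt⟩ := hG.exists_shorter_isRainbow hp hc (by omega)
      exact ih _ (by omega) hq hqc rfl

theorem exists_isCycle_isRainbow [Fintype V] [Nonempty V] [Fintype α]
    (hsurj : ∀ a : α, ∃ e ∈ G.edgeSet, c e = a) (hcard : Fintype.card V ≤ Fintype.card α) :
    ∃ (u : V) (p : G.Walk u u), p.IsCycle ∧ p.IsRainbow c := by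
  classical
  choose f hfG hfc using hsurj
  have hf : f.Injective := fun a b h => by rw [← hfc a, ← hfc b, h]
  set H := fromEdgeSet (Set.range f)
  have hHG : H ≤ G := (fromEdgeSet_le G).2 fun e he => by
    obtain ⟨a, rfl⟩ := he.1
    exact hfG a
  have hHedges : H.edgeSet = Set.range f := by
    refine (edgeSet_fromEdgeSet _).trans (sdiff_eq_left.2 (Set.disjoint_left.2 ?_))
    rintro _ ⟨a, rfl⟩
    exact G.not_isDiag_of_mem_edgeSet (hfG a)
  have hH : ¬ H.IsAcyclic := fun hH => by
    have := hH.card_edgeFinset_lt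
    rw [edgeFinset_card, Fintype.card_congr (Equiv.setCongr hHedges),
      Set.card_range_of_injective hf] at this
    omega
  simp only [IsAcyclic, not_forall, not_not] at hH
  obtain ⟨u, p, hp⟩ := hH
  refine ⟨u, p.mapLe hHG, (isCycle_mapLe hHG).2 hp, ?_⟩
  rw [IsRainbow, edges_mapLe_eq_edges]
  refine hp.edges_nodup.map_on fun x hx y hy hxy => ?_
  obtain ⟨a, rfl⟩ : x ∈ Set.range f := hHedges ▸ p.edges_subset_edgeSet hx
  obtain ⟨b, rfl⟩ : y ∈ Set.range f := hHedges ▸ p.edges_subset_edgeSet hy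
  rw [hfc, hfc] at hxy
  rw [hxy]

end SimpleGraph

theorem rainbow_C3_or_C4_of_many_colors_general (r : ℕ) (n : ℕ → ℕ) (hr : 3 ≤ r)
    (hpos : ∀ i : ℕ, i < r → 1 ≤ n i)
    (c : Sym2 ((i : Fin r) × Fin (n i)) → Fin (∑ i ∈ Finset.range r, n i))
    (hc : SurjOnEdges (Kpartite r n) c) :
    RainbowC3 (Kpartite r n) c ∨ RainbowC4 (Kpartite r n) c := by
  have : Nonempty ((i : Fin r) × Fin (n i)) := ⟨⟨⟨0, by omega⟩, ⟨0, hpos 0 (by omega)⟩⟩⟩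
  have hcard : Fintype.card ((i : Fin r) × Fin (n i)) ≤
      Fintype.card (Fin (∑ i ∈ range r, n i)) := by
    simp [Fintype.card_sigma, Fin.sum_univ_eq_sum_range]
  obtain ⟨u, p, hp, hrain⟩ := SimpleGraph.exists_isCycle_isRainbow hc hcard
  exact (SimpleGraph.completeMultipartiteGraph.isCompleteMultipartite _).rainbowC3_or_rainbowC4
    hp hrain

/-- Every edge-coloring of `K_{n₁,…,n_r}` with exactly `n₁+⋯+n_r` colors contains a
rainbow `C₃` or a rainbow `C₄`. -/
theorem rainbow_C3_or_C4_of_many_colors (r : ℕ) (n : ℕ → ℕ) (hr : 3 ≤ r)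
    (hmono : ∀ i j : ℕ, i ≤ j → j < r → n j ≤ n i)
    (hpos : ∀ i : ℕ, i < r → 1 ≤ n i)
    (c : Sym2 ((i : Fin r) × Fin (n i)) → Fin (∑ i ∈ Finset.range r, n i))
    (hc : SurjOnEdges (Kpartite r n) c) :
    RainbowC3 (Kpartite r n) c ∨ RainbowC4 (Kpartite r n) c :=
  rainbow_C3_or_C4_of_many_colors_general r n hr hpos c hc
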